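/- Assume that every diagonal entry of B is nonzero and every row of B̃ is nonzero. Let L be the lower-triangular part of B (L_{ij} = B_{ij} if j ≤ i and L_{ij} = 0 otherwise) and R = B − L. Let sequences x₁^(k) ∈ ℝ^m and x₂^(k) ∈ ℝ^p satisfy, for all k ≥ 0: x₂^(k+1) = x₂^(k) + s(B̃)·d^(k) with d^(k)_i = (b_i − B_i·x₁^(k) − B̃_i·x₂^(k))/(m·‖B̃_i‖₁), and x₁^(k+1) = L⁻¹·(−R·x₁^(k) + b − B̃·x₂^(k+1)). If ‖I − B·L⁻¹‖₁ · ‖I − (1/m)·B̃·s(B̃)·N(B̃)⁻¹‖₁ < 1 (ℓ1 operator norms), then the sequence (x₁^(k), x₂^(k)) converges to a limit (x₁, x₂) in ℝ^m × ℝ^p, and this limit solves the system: B·x₁ + B̃·x₂ = b. -/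

import Mathlib

/-- The ℓ1-norm of a vector: sum of absolute values of its entries. -/
noncomputable def vecL1 {n : ℕ} (v : Fin n → ℝ) : ℝ := ∑ i, |v i|

/-- The ℓ1 operator norm of a matrix: the maximum absolute column sum. -/
noncomputable def matL1 {a c : ℕ} (M : Matrix (Fin a) (Fin c) ℝ) : ℝ :=
  ⨆ j, ∑ i, |M i j|

/-!
Track the residual `r = b - B x₁ - B̃ x₂`. The `x₂`-update multiplies it by
`M₂ = I - (1/m) B̃ s N⁻¹`, and the `x₁`-update, which moves `x₁` by `L⁻¹` applied to the current
residual, then multiplies it by `M₁ = I - B L⁻¹`. Hence `‖r_k‖₁ ≤ (‖M₁‖₁ ‖M₂‖₁)ᵏ ‖r₀‖₁`, both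
increments are bounded by constant multiples of that geometric sequence, the iterates are Cauchy,
and the residual of their limit is `lim r_k = 0`.
-/

open Filter Topology Matrix

section L1Norm

variable {a c : ℕ}

lemma vecL1_nonneg (v : Fin a → ℝ) : 0 ≤ vecL1 v :=
  Finset.sum_nonneg fun _ _ => abs_nonneg _

lemma vecL1_eq_zero_iff {v : Fin a → ℝ} : vecL1 v = 0 ↔ v = 0 := by
  simp [vecL1, Finset.sum_eq_zero_iff_of_nonneg, funext_iff]

lemma norm_le_vecL1 (v : Fin a → ℝ) : ‖v‖ ≤ vecL1 v :=
  (pi_norm_le_iff_of_nonneg (vecL1_nonneg v)).2 fun i =>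
    Finset.single_le_sum (f := fun j => |v j|) (fun j _ => abs_nonneg (v j)) (Finset.mem_univ i)

lemma sum_abs_le_matL1 (M : Matrix (Fin a) (Fin c) ℝ) (j : Fin c) : ∑ i, |M i j| ≤ matL1 M :=
  le_ciSup (f := fun j => ∑ i, |M i j|) (Set.finite_range _).bddAbove j

lemma matL1_nonneg (M : Matrix (Fin a) (Fin c) ℝ) : 0 ≤ matL1 M :=
  Real.iSup_nonneg fun _ => Finset.sum_nonneg fun _ _ => abs_nonneg _

lemma vecL1_mulVec_le (M : Matrix (Fin a) (Fin c) ℝ) (v : Fin c → ℝ) :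
    vecL1 (M *ᵥ v) ≤ matL1 M * vecL1 v := by
  unfold vecL1
  calc ∑ i, |(M *ᵥ v) i| ≤ ∑ i, ∑ j, |M i j| * |v j| := by
        gcongr with i
        simpa [mulVec, dotProduct, abs_mul] using
          Finset.abs_sum_le_sum_abs (fun j => M i j * v j) Finset.univ
    _ = ∑ j, (∑ i, |M i j|) * |v j| := by rw [Finset.sum_comm]; simp [Finset.sum_mul]
    _ ≤ ∑ j, matL1 M * |v j| := by gcongr with j; exact sum_abs_le_matL1 M j
    _ = matL1 M * ∑ j, |v j| := by rw [Finset.mul_sum]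

lemma exists_tendsto_of_vecL1_sub_le_geometric {x : ℕ → Fin a → ℝ} {C q : ℝ} (hq : q < 1)
    (h : ∀ k, vecL1 (x (k + 1) - x k) ≤ C * q ^ k) : ∃ y, Tendsto x atTop (𝓝 y) :=
  cauchySeq_tendsto_of_complete <| cauchySeq_of_le_geometric q C hq fun k => by
    rw [dist_comm, dist_eq_norm]
    exact (norm_le_vecL1 _).trans (h k)

end L1Norm

lemma isUnit_det_of_isLowerTriangular {n : ℕ} {L : Matrix (Fin n) (Fin n) ℝ}
    (hL : L.IsLowerTriangular) (hdiag : ∀ i, L i i ≠ 0) : IsUnit L.det := by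
  rw [det_of_isLowerTriangular L hL]
  exact IsUnit.mk0 _ (Finset.prod_ne_zero_iff.2 fun i _ => hdiag i)

lemma inv_diagonal_mulVec {n : ℕ} {w : Fin n → ℝ} (hw : ∀ i, w i ≠ 0) (v : Fin n → ℝ) :
    (diagonal w)⁻¹ *ᵥ v = fun i => v i / w i := by
  have hinv : (diagonal w)⁻¹ = diagonal w⁻¹ := inv_eq_left_inv <| by
    rw [diagonal_mul_diagonal, ← diagonal_one]
    exact congrArg diagonal (funext fun i => inv_mul_cancel₀ (hw i))
  ext i
  simp [hinv, mulVec_diagonal, div_eq_inv_mul]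

lemma one_sub_mul_mulVec {a c : ℕ} (C : Matrix (Fin a) (Fin c) ℝ) (K : Matrix (Fin c) (Fin a) ℝ)
    (v : Fin a → ℝ) : (1 - C * K) *ᵥ v = v - C *ᵥ (K *ᵥ v) := by
  rw [sub_mulVec, one_mulVec, mulVec_mulVec]

section GaussSeidel

variable {m p : ℕ} (B : Matrix (Fin m) (Fin m) ℝ) (Bt : Matrix (Fin m) (Fin p) ℝ) (b : Fin m → ℝ)

def blockResidual (y₁ : Fin m → ℝ) (y₂ : Fin p → ℝ) : Fin m → ℝ := b - B *ᵥ y₁ - Bt *ᵥ y₂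

lemma blockResidual_add_left (y₁ v : Fin m → ℝ) (y₂ : Fin p → ℝ) :
    blockResidual B Bt b (y₁ + v) y₂ = blockResidual B Bt b y₁ y₂ - B *ᵥ v := by
  simp only [blockResidual, mulVec_add]; abel

lemma blockResidual_add_right (y₁ : Fin m → ℝ) (y₂ v : Fin p → ℝ) :
    blockResidual B Bt b y₁ (y₂ + v) = blockResidual B Bt b y₁ y₂ - Bt *ᵥ v := by
  simp only [blockResidual, mulVec_add]; abel

lemma continuous_blockResidual :
    Continuous fun y : (Fin m → ℝ) × (Fin p → ℝ) => blockResidual B Bt b y.1 y.2 :=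
  (continuous_const.sub (continuous_const.matrix_mulVec continuous_fst)).sub
    (continuous_const.matrix_mulVec continuous_snd)

lemma nonsing_inv_mulVec_eq_add_blockResidual {L : Matrix (Fin m) (Fin m) ℝ} (hL : IsUnit L.det)
    (y₁ : Fin m → ℝ) (y₂ : Fin p → ℝ) :
    L⁻¹ *ᵥ (-((B - L) *ᵥ y₁) + (b - Bt *ᵥ y₂)) = y₁ + L⁻¹ *ᵥ blockResidual B Bt b y₁ y₂ := by
  have : -((B - L) *ᵥ y₁) + (b - Bt *ᵥ y₂) = L *ᵥ y₁ + blockResidual B Bt b y₁ y₂ := by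
    rw [blockResidual, sub_mulVec]; abel
  rw [this, mulVec_add, mulVec_mulVec, nonsing_inv_mul L hL, one_mulVec]

theorem exists_tendsto_gaussSeidel_of_matL1_mul_lt_one {L : Matrix (Fin m) (Fin m) ℝ}
    (hL : IsUnit L.det) {W : Matrix (Fin p) (Fin m) ℝ} {x₁ : ℕ → Fin m → ℝ} {x₂ : ℕ → Fin p → ℝ}
    (hx₂ : ∀ k, x₂ (k + 1) = x₂ k + W *ᵥ blockResidual B Bt b (x₁ k) (x₂ k))
    (hx₁ : ∀ k, x₁ (k + 1) = L⁻¹ *ᵥ (-((B - L) *ᵥ x₁ k) + (b - Bt *ᵥ x₂ (k + 1))))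
    (hq : matL1 (1 - B * L⁻¹) * matL1 (1 - Bt * W) < 1) :
    ∃ y₁ y₂, Tendsto (fun k => (x₁ k, x₂ k)) atTop (𝓝 (y₁, y₂)) ∧ B *ᵥ y₁ + Bt *ᵥ y₂ = b := by
  set r := fun k => blockResidual B Bt b (x₁ k) (x₂ k)
  set q := matL1 (1 - B * L⁻¹) * matL1 (1 - Bt * W)
  have hq₀ : 0 ≤ q := mul_nonneg (matL1_nonneg _) (matL1_nonneg _)
  have hhalf : ∀ k, blockResidual B Bt b (x₁ k) (x₂ (k + 1)) = (1 - Bt * W) *ᵥ r k := fun k => by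
    rw [hx₂, blockResidual_add_right, one_sub_mul_mulVec]
  have hx₁_step : ∀ k, x₁ (k + 1) = x₁ k + L⁻¹ *ᵥ ((1 - Bt * W) *ᵥ r k) := fun k => by
    rw [hx₁, nonsing_inv_mulVec_eq_add_blockResidual B Bt b hL, hhalf]
  have hr_succ : ∀ k, r (k + 1) = (1 - B * L⁻¹) *ᵥ ((1 - Bt * W) *ᵥ r k) := fun k => by
    simp only [r]
    rw [hx₁_step, blockResidual_add_left, hhalf, one_sub_mul_mulVec B L⁻¹]
  have hdecay : ∀ k, vecL1 (r k) ≤ q ^ k * vecL1 (r 0) := fun k =>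
    le_geom (u := fun k => vecL1 (r k)) hq₀ k fun j _ => by
      rw [hr_succ, mul_assoc]
      exact (vecL1_mulVec_le _ _).trans <| by gcongr; exacts [matL1_nonneg _, vecL1_mulVec_le _ _]
  have hstep : ∀ {a : ℕ} (A : Matrix (Fin a) (Fin m) ℝ) (k : ℕ),
      vecL1 (A *ᵥ r k) ≤ matL1 A * vecL1 (r 0) * q ^ k := fun A k => by
    rw [mul_right_comm, mul_assoc]
    exact (vecL1_mulVec_le A _).trans (by gcongr; exacts [matL1_nonneg _, hdecay k])
  obtain ⟨y₁, hy₁⟩ := exists_tendsto_of_vecL1_sub_le_geometric (x := x₁) hq fun k => by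
    rw [hx₁_step, add_sub_cancel_left, mulVec_mulVec]
    exact hstep _ k
  obtain ⟨y₂, hy₂⟩ := exists_tendsto_of_vecL1_sub_le_geometric (x := x₂) hq fun k => by
    rw [hx₂, add_sub_cancel_left]
    exact hstep W k
  have hlim : Tendsto (fun k => (x₁ k, x₂ k)) atTop (𝓝 (y₁, y₂)) := hy₁.prodMk_nhds hy₂
  have hr_zero : Tendsto r atTop (𝓝 0) :=
    squeeze_zero_norm (fun k => (norm_le_vecL1 _).trans (hdecay k)) <| by
      simpa using (tendsto_pow_atTop_nhds_zero_of_lt_one hq₀ hq).mul_const (vecL1 (r 0))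
  have hres : blockResidual B Bt b y₁ y₂ = 0 :=
    tendsto_nhds_unique (((continuous_blockResidual B Bt b).tendsto _).comp hlim) hr_zero
  refine ⟨y₁, y₂, hlim, ?_⟩
  rw [blockResidual, sub_sub, sub_eq_zero] at hres
  exact hres.symm

end GaussSeidel

theorem generalized_gauss_seidel_converges_to_solution_general
    (m p : ℕ)
    (B : Matrix (Fin m) (Fin m) ℝ) (Bt : Matrix (Fin m) (Fin p) ℝ) (b : Fin m → ℝ)
    (hDiag : ∀ i, B i i ≠ 0) (hRows : ∀ i, Bt i ≠ 0)
    (s : Matrix (Fin p) (Fin m) ℝ)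
    (N : Matrix (Fin m) (Fin m) ℝ)
    (hN : N = Matrix.diagonal (fun i => ∑ j, |Bt i j|))
    (L : Matrix (Fin m) (Fin m) ℝ) (hL : ∀ i j, L i j = if (j : ℕ) ≤ (i : ℕ) then B i j else 0)
    (R : Matrix (Fin m) (Fin m) ℝ) (hR : R = B - L)
    (x₁ : ℕ → Fin m → ℝ) (x₂ : ℕ → Fin p → ℝ)
    (d : ℕ → Fin m → ℝ)
    (hd : ∀ k i, d k i = (b i - (B.mulVec (x₁ k)) i - (Bt.mulVec (x₂ k)) i) /
      ((m : ℝ) * ∑ j, |Bt i j|))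
    (hx₂ : ∀ k, x₂ (k + 1) = x₂ k + s.mulVec (d k))
    (hx₁ : ∀ k, x₁ (k + 1) = L⁻¹.mulVec (-(R.mulVec (x₁ k)) + (b - Bt.mulVec (x₂ (k + 1)))))
    (hq1 : matL1 (1 - B * L⁻¹) * matL1 (1 - (1 / (m : ℝ)) • (Bt * s * N⁻¹)) < 1) :
    ∃ y₁ : Fin m → ℝ, ∃ y₂ : Fin p → ℝ,
      Filter.Tendsto (fun k => (x₁ k, x₂ k)) Filter.atTop (nhds (y₁, y₂)) ∧
      B.mulVec y₁ + Bt.mulVec y₂ = b := by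
  have hLdet : IsUnit L.det :=
    isUnit_det_of_isLowerTriangular (fun i j hij => by simp [hL, not_le.2 (show i < j from hij)])
      fun i => by simpa [hL] using hDiag i
  have hNdiag : ∀ i, ∑ j, |Bt i j| ≠ 0 := fun i => vecL1_eq_zero_iff.not.2 (hRows i)
  set W := (1 / (m : ℝ)) • (s * N⁻¹) with hW
  have hx₂_residual :
      ∀ k, x₂ (k + 1) = x₂ k + W *ᵥ blockResidual B Bt b (x₁ k) (x₂ k) := fun k => by
    have hdk : d k = N⁻¹ *ᵥ ((1 / (m : ℝ)) • blockResidual B Bt b (x₁ k) (x₂ k)) := by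
      ext i
      rw [hd, hN, inv_diagonal_mulVec hNdiag]
      simp only [blockResidual, Pi.smul_apply, Pi.sub_apply, smul_eq_mul]
      field_simp
    rw [hx₂, hdk, mulVec_mulVec, mulVec_smul, ← smul_mulVec]
  subst hR
  exact exists_tendsto_gaussSeidel_of_matL1_mul_lt_one B Bt b hLdet hx₂_residual hx₁
    (by rwa [hW, Matrix.mul_smul, ← Matrix.mul_assoc])

/-- if `‖I − B L⁻¹‖₁ ‖I − (1/m) B̃ s N⁻¹‖₁ < 1`, then the generalized
Gauss–Seidel iterates converge to a limit `(y₁, y₂)`, and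
that limit solves `B y₁ + B̃ y₂ = b`. -/
theorem generalized_gauss_seidel_converges_to_solution
    (m p : ℕ) (hm : 0 < m) (hp : 0 < p)
    (B : Matrix (Fin m) (Fin m) ℝ) (Bt : Matrix (Fin m) (Fin p) ℝ) (b : Fin m → ℝ)
    (hDiag : ∀ i, B i i ≠ 0) (hRows : ∀ i, Bt i ≠ 0)
    (s : Matrix (Fin p) (Fin m) ℝ) (hs : ∀ j i, s j i = Real.sign (Bt i j))
    (N : Matrix (Fin m) (Fin m) ℝ)
    (hN : N = Matrix.diagonal (fun i => ∑ j, |Bt i j|))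
    (L : Matrix (Fin m) (Fin m) ℝ) (hL : ∀ i j, L i j = if (j : ℕ) ≤ (i : ℕ) then B i j else 0)
    (R : Matrix (Fin m) (Fin m) ℝ) (hR : R = B - L)
    (x₁ : ℕ → Fin m → ℝ) (x₂ : ℕ → Fin p → ℝ)
    (d : ℕ → Fin m → ℝ)
    (hd : ∀ k i, d k i = (b i - (B.mulVec (x₁ k)) i - (Bt.mulVec (x₂ k)) i) /
      ((m : ℝ) * ∑ j, |Bt i j|))
    (hx₂ : ∀ k, x₂ (k + 1) = x₂ k + s.mulVec (d k))
    (hx₁ : ∀ k, x₁ (k + 1) = L⁻¹.mulVec (-(R.mulVec (x₁ k)) + (b - Bt.mulVec (x₂ (k + 1)))))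
    (hq1 : matL1 (1 - B * L⁻¹) * matL1 (1 - (1 / (m : ℝ)) • (Bt * s * N⁻¹)) < 1) :
    ∃ y₁ : Fin m → ℝ, ∃ y₂ : Fin p → ℝ,
      Filter.Tendsto (fun k => (x₁ k, x₂ k)) Filter.atTop (nhds (y₁, y₂)) ∧
      B.mulVec y₁ + Bt.mulVec y₂ = b :=
  generalized_gauss_seidel_converges_to_solution_general m p B Bt b hDiag hRows s N hN L hL R hR x₁
    x₂ d hd hx₂ hx₁ hq1
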